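/- Let c > 0 and let s(x) = ((x+1)/2)·log((x+1)/2) − ((x−1)/2)·log((x−1)/2) for x > 1. Then lim_{t→∞} [s(cosh(ct)) − c·t] = 1 − 2·log 2; that is, the entanglement entropy S_A(t) = s(cosh(ct)) satisfies S_A(t) ∼ c·t + 1 − 2·log 2, growing linearly at rate c. -/

import Mathlib

open Real Filter Topology

/-- The function relating entanglement entropy to Rényi entropy of a single bosonic mode. -/
noncomputable def entFun (x : ℝ) : ℝ :=
  ((x + 1) / 2) * Real.log ((x + 1) / 2) - ((x - 1) / 2) * Real.log ((x - 1) / 2)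

/-!
With `b = (x - 1) / 2` one has `entFun x = (b + 1) log (b + 1) - b log b
= log (b + 1) + b log (1 + 1 / b)`, and `b log (1 + 1 / b) → 1`.
For `x = cosh s` moreover `(x + 1) / 2 = cosh² (s / 2) = e^s ((1 + e^{-s}) / 2)²`,
so `log ((x + 1) / 2) - s → 2 log (1 / 2)`.
-/

lemma entFun_eq_log_add_mul_log {x : ℝ} (hx : 1 < x) :
    entFun x = log ((x + 1) / 2) + (x - 1) / 2 * log (1 + 1 / ((x - 1) / 2)) := by
  have hb : 0 < (x - 1) / 2 := by linarith
  have h_ratio : 1 + 1 / ((x - 1) / 2) = ((x + 1) / 2) / ((x - 1) / 2) := by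
    have hx1 : x - 1 ≠ 0 := by linarith
    field_simp
    ring
  rw [entFun, h_ratio, log_div (by linarith) hb.ne']
  ring

lemma tendsto_entFun_sub_log_atTop :
    Tendsto (fun x => entFun x - log ((x + 1) / 2)) atTop (𝓝 1) := by
  have h_half : Tendsto (fun x : ℝ => (x - 1) / 2) atTop atTop :=
    (tendsto_atTop_add_const_right atTop (-1) tendsto_id).atTop_div_const two_pos
  refine ((tendsto_mul_log_one_add_div_atTop 1).comp h_half).congr' ?_
  filter_upwards [eventually_gt_atTop 1] with x hx
  simp only [Function.comp_apply, entFun_eq_log_add_mul_log hx, add_sub_cancel_left]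

lemma log_cosh_add_one_div_two_sub (s : ℝ) :
    log ((cosh s + 1) / 2) - s = 2 * log ((1 + exp (-s)) / 2) := by
  have h_factor : (cosh s + 1) / 2 = exp s * ((1 + exp (-s)) / 2) ^ 2 := by
    rw [cosh_eq]
    have h_inv : exp s * exp (-s) = 1 := by rw [← exp_add, add_neg_cancel, exp_zero]
    field_simp
    linear_combination (-(2 + exp (-s))) * h_inv
  rw [h_factor, log_mul (exp_pos s).ne' (by positivity), log_exp, log_pow]
  push_cast
  ring

lemma tendsto_log_cosh_add_one_div_two_sub_atTop :
    Tendsto (fun s => log ((cosh s + 1) / 2) - s) atTop (𝓝 (-(2 * log 2))) := by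
  have h_exp : Tendsto (fun s => exp (-s)) atTop (𝓝 0) :=
    tendsto_exp_atBot.comp tendsto_neg_atTop_atBot
  have h_arg : Tendsto (fun s => (1 + exp (-s)) / 2) atTop (𝓝 (1 / 2)) := by
    simpa using (h_exp.const_add 1).div_const 2
  have h_log := ((continuousAt_log (by norm_num : (1 / 2 : ℝ) ≠ 0)).tendsto.comp h_arg).const_mul 2
  rw [one_div, log_inv, mul_neg] at h_log
  simpa only [log_cosh_add_one_div_two_sub, Function.comp_def] using h_log

lemma tendsto_cosh_atTop : Tendsto cosh atTop atTop := by
  refine tendsto_atTop_mono (fun s => ?_) (tendsto_exp_atTop.atTop_div_const two_pos)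
  rw [cosh_eq]
  linarith [exp_pos (-s)]

/-- The entanglement entropy S_A(t) = s(cosh(ct)) grows linearly at rate c:
S_A(t) − ct → 1 − 2·log 2 as t → ∞. -/
theorem stmt_16 (c : ℝ) (hc : 0 < c) :
    Tendsto (fun t => entFun (Real.cosh (c * t)) - c * t) atTop
      (𝓝 (1 - 2 * Real.log 2)) := by
  have h_rate : Tendsto (fun t => c * t) atTop atTop := tendsto_id.const_mul_atTop hc
  have h_lim : Tendsto (fun s => (entFun (cosh s) - log ((cosh s + 1) / 2))
      + (log ((cosh s + 1) / 2) - s)) atTop (𝓝 (1 + -(2 * log 2))) :=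
    (tendsto_entFun_sub_log_atTop.comp tendsto_cosh_atTop).add
      tendsto_log_cosh_add_one_div_two_sub_atTop
  rw [← sub_eq_add_neg] at h_lim
  simpa only [sub_add_sub_cancel, Function.comp_def] using h_lim.comp h_rate
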